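/- For every β ∈ R one has Q(τ·β) = 2·Q(β); consequently, if α ∈ R is divisible by τ with α = τ·β, then Q(β) = Q(α)/2. -/

import Mathlib

/-!
Since `a + b = μ` and `a * b = -4` for the two real roots `a, b` of `t² - μ t - 4`, the polynomial
factors as `p = (X² - a X + 2)(X² - b X + 2)`. For `μ = ±1` both `a²` and `b²` are below `8`, so each
quadratic factor has a pair of complex conjugate roots with product `2`: every root `z` of `p` has
`‖z‖² = 2`. Hence `‖φ_z(τ β)‖² = 2 ‖φ_z(β)‖²` term by term in `Q`.
-/

open Polynomial

noncomputable def P (μ : ℤ) : ℤ[X] := X ^ 4 - C μ * X ^ 3 - C (2 * μ) * X + 4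

noncomputable abbrev Rg (μ : ℤ) := AdjoinRoot (P μ)

noncomputable def tau (μ : ℤ) : Rg μ := AdjoinRoot.root (P μ)

noncomputable def Q (μ : ℤ) (α : Rg μ) : ℝ :=
  (1 / 2) * (((P μ).map (Int.castRingHom ℂ)).roots.attach.map
    (fun z => ‖AdjoinRoot.lift (Int.castRingHom ℂ) z.1
      (by
        have h2 : Polynomial.eval z.1 ((P μ).map (Int.castRingHom ℂ)) = 0 :=
          (Polynomial.mem_roots'.mp z.2).2
        rwa [Polynomial.eval_map] at h2) α‖ ^ 2)).sum

theorem Complex.normSq_eq_of_sq_sub_mul_add_eq_zero {c q : ℝ} (hc : c ^ 2 < 4 * q) {z : ℂ}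
    (hz : z ^ 2 - c * z + q = 0) : Complex.normSq z = q := by
  have hre := congrArg Complex.re hz
  have him := congrArg Complex.im hz
  simp only [pow_two, Complex.sub_re, Complex.add_re, Complex.mul_re, Complex.ofReal_re,
    Complex.ofReal_im, Complex.sub_im, Complex.add_im, Complex.mul_im, Complex.zero_re,
    Complex.zero_im] at hre him
  have hx : 2 * z.re = c := by
    have : z.im * (2 * z.re - c) = 0 := by linear_combination him
    rcases mul_eq_zero.mp this with hy | hx
    · nlinarith [sq_nonneg (2 * z.re - c)]
    · linarith
  rw [Complex.normSq_apply]
  linear_combination -hre + z.re * hx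

theorem exists_add_eq_mul_eq_neg_four (m : ℝ) : ∃ a b : ℝ, a + b = m ∧ a * b = -4 := by
  have hs : √(m ^ 2 + 16) ^ 2 = m ^ 2 + 16 := Real.sq_sqrt (by positivity)
  exact ⟨(m + √(m ^ 2 + 16)) / 2, (m - √(m ^ 2 + 16)) / 2, by ring, by linear_combination -hs / 4⟩

theorem sq_lt_eight_of_sq_sub_mul_sub_four_eq_zero {m t : ℝ} (hm : |m| ≤ 1)
    (ht : t ^ 2 - m * t - 4 = 0) : t ^ 2 < 8 := by
  have hmt : m * t ≤ |t| := by
    calc m * t ≤ |m * t| := le_abs_self _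
      _ = |m| * |t| := abs_mul m t
      _ ≤ 1 * |t| := by gcongr
      _ = |t| := one_mul _
  have ht4 : |t| < 4 := by nlinarith [sq_abs t, abs_nonneg t]
  linarith

theorem eval_map_P_eq_mul (μ : ℤ) {a b : ℂ} (hsum : a + b = μ) (hprod : a * b = -4) (z : ℂ) :
    ((P μ).map (Int.castRingHom ℂ)).eval z = (z ^ 2 - a * z + 2) * (z ^ 2 - b * z + 2) := by
  simp only [P, eval_map, eval₂_sub, eval₂_add, eval₂_mul, eval₂_pow, eval₂_X, eval₂_C,
    eval₂_ofNat]
  simp only [eq_intCast]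
  push_cast
  linear_combination (2 * z + z ^ 3) * hsum - z ^ 2 * hprod

theorem normSq_eq_two_of_mem_roots {μ : ℤ} (hμ : μ = 1 ∨ μ = -1) {z : ℂ}
    (hz : z ∈ ((P μ).map (Int.castRingHom ℂ)).roots) : Complex.normSq z = 2 := by
  have hμ_abs : |(μ : ℝ)| ≤ 1 := by rcases hμ with rfl | rfl <;> norm_num
  obtain ⟨a, b, hsum, hprod⟩ := exists_add_eq_mul_eq_neg_four μ
  have hsumℂ : (a : ℂ) + b = μ := by exact_mod_cast hsum
  have hprodℂ : (a : ℂ) * b = -4 := by exact_mod_cast hprod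
  have ha : a ^ 2 < 4 * 2 := by
    linarith [sq_lt_eight_of_sq_sub_mul_sub_four_eq_zero hμ_abs (t := a)
      (by linear_combination -hprod + a * hsum)]
  have hb : b ^ 2 < 4 * 2 := by
    linarith [sq_lt_eight_of_sq_sub_mul_sub_four_eq_zero hμ_abs (t := b)
      (by linear_combination -hprod + b * hsum)]
  have hroot : ((P μ).map (Int.castRingHom ℂ)).eval z = 0 := (mem_roots'.mp hz).2
  rw [eval_map_P_eq_mul μ hsumℂ hprodℂ] at hroot
  rcases mul_eq_zero.mp hroot with h | h
  · exact_mod_cast Complex.normSq_eq_of_sq_sub_mul_add_eq_zero ha (by exact_mod_cast h)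
  · exact_mod_cast Complex.normSq_eq_of_sq_sub_mul_add_eq_zero hb (by exact_mod_cast h)

theorem Q_tau_mul {μ : ℤ} (hμ : μ = 1 ∨ μ = -1) (β : Rg μ) :
    Q μ (tau μ * β) = 2 * Q μ β := by
  unfold Q
  rw [mul_left_comm]
  congr 1
  rw [← Multiset.sum_map_mul_left]
  refine congrArg Multiset.sum (Multiset.map_congr rfl fun z _ => ?_)
  rw [map_mul, tau, AdjoinRoot.lift_root, norm_mul, mul_pow, ← Complex.normSq_eq_norm_sq,
    normSq_eq_two_of_mem_roots hμ z.2]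

/-- Multiplication by `τ` doubles the squared norm: `Q(τ·β) = 2·Q(β)`; consequently
if `α = τ·β` then `Q(β) = Q(α)/2`. -/
theorem stmt14 (μ : ℤ) (hμ : μ = 1 ∨ μ = -1) :
    (∀ β : Rg μ, Q μ (tau μ * β) = 2 * Q μ β) ∧
    (∀ α β : Rg μ, α = tau μ * β → Q μ β = Q μ α / 2) := by
  refine ⟨Q_tau_mul hμ, fun α β h => ?_⟩
  rw [h, Q_tau_mul hμ β]
  ring
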